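/- (Proposition 1) If a sample x with pseudo-label ŷ = sign(θ ⬝ v(x)) satisfies ŷ · v(x) ⬝ (E[v | class +1] - E[v | class -1]) < 0, then a gradient descent step on the entropy loss using x strictly decreases the difference of mean logits between the two classes, i.e., the sample is harmful. -/

import Mathlib

open RealInnerProductSpace

noncomputable def sigmoid (a : ℝ) : ℝ := 1 / (1 + Real.exp (-a))

noncomputable def sigEnt (a : ℝ) : ℝ :=
  -sigmoid a * Real.log (sigmoid a) - (1 - sigmoid a) * Real.log (1 - sigmoid a)

/-!
The entropy of a sigmoid output has derivative `-a σ(a) (1 - σ(a))` in the logit `a`, so the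
gradient of `θ ↦ Ent(σ ⟪θ, v⟫)` is `-a σ(1 - σ) • v` and the step moves the logit gap
`⟪θ, μ₊ - μ₋⟫` by `η σ(1 - σ) · a ⟪v, μ₊ - μ₋⟫`. For `a ≠ 0` the pseudo-label `ŷ` has the sign
of `a`, so harmfulness `ŷ ⟪v, μ₊ - μ₋⟫ < 0` makes this change negative.
-/

theorem sigmoid_eq_real_sigmoid : sigmoid = Real.sigmoid := by
  funext a
  rw [sigmoid, Real.sigmoid_def, one_div]

theorem Real.log_one_sub_sigmoid (a : ℝ) :
    Real.log (1 - Real.sigmoid a) = Real.log (Real.sigmoid a) - a := by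
  rw [← Real.sigmoid_neg, ← Real.sigmoid_mul_rexp_neg,
    Real.log_mul (Real.sigmoid_pos a).ne' (Real.exp_pos _).ne', Real.log_exp, sub_eq_add_neg]

theorem hasDerivAt_sigEnt (a : ℝ) :
    HasDerivAt sigEnt (-a * (Real.sigmoid a * (1 - Real.sigmoid a))) a := by
  have hσ := Real.hasDerivAt_sigmoid a
  have hσ_ne : Real.sigmoid a ≠ 0 := (Real.sigmoid_pos a).ne'
  have hσ'_ne : 1 - Real.sigmoid a ≠ 0 := (sub_pos.2 (Real.sigmoid_lt_one a)).ne'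
  have hσ' : HasDerivAt (fun x => 1 - Real.sigmoid x)
      (-(Real.sigmoid a * (1 - Real.sigmoid a))) a := hσ.const_sub 1
  have h := ((hσ.neg).mul (hσ.log hσ_ne)).sub (hσ'.mul (hσ'.log hσ'_ne))
  have hsigEnt : sigEnt = fun x => -Real.sigmoid x * Real.log (Real.sigmoid x) -
      (1 - Real.sigmoid x) * Real.log (1 - Real.sigmoid x) := by
    funext x
    simp only [sigEnt, sigmoid_eq_real_sigmoid]
  rw [hsigEnt]
  refine h.congr_deriv ?_
  rw [Pi.neg_apply, Real.log_one_sub_sigmoid]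
  field_simp
  ring

theorem HasDerivAt.hasGradientAt_comp_inner {E : Type*} [NormedAddCommGroup E]
    [InnerProductSpace ℝ E] [CompleteSpace E] {f : ℝ → ℝ} {f' : ℝ} {x v : E}
    (hf : HasDerivAt f f' ⟪x, v⟫) :
    HasGradientAt (fun y => f ⟪y, v⟫) (f' • v) x := by
  have hinner : HasFDerivAt (fun y : E => ⟪y, v⟫) (innerSL ℝ v) x := by
    simp_rw [real_inner_comm v]
    exact (innerSL ℝ v).hasFDerivAt
  rw [hasGradientAt_iff_hasFDerivAt]
  refine (hf.comp_hasFDerivAt x hinner).congr_fderiv ?_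
  ext y
  simp only [smul_apply, coe_innerSL_apply, smul_eq_mul, map_smul,
    InnerProductSpace.toDual_apply_apply]

theorem mul_neg_of_sign_mul_neg {α : Type*} [Field α] [LinearOrder α] [IsStrictOrderedRing α]
    {a b : α} (ha : a ≠ 0) (h : (if 0 < a then 1 else -1) * b < 0) : a * b < 0 := by
  split_ifs at h with hpos
  · exact mul_neg_of_pos_of_neg hpos (by linarith)
  · exact mul_neg_of_neg_of_pos (lt_of_le_of_ne (not_lt.1 hpos) ha) (by linarith)

theorem harmful_sample {d : ℕ} (θ v μp μm : EuclideanSpace ℝ (Fin d))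
    (η : ℝ) (hη : 0 < η)
    (ha : ⟪θ, v⟫ ≠ 0)
    (yhat : ℝ) (hy : yhat = if 0 < ⟪θ, v⟫ then 1 else -1)
    (hharm : yhat * ⟪v, μp - μm⟫ < 0)
    (Δθ : EuclideanSpace ℝ (Fin d))
    (hΔ : Δθ = -η • gradient (fun θ' : EuclideanSpace ℝ (Fin d) => sigEnt ⟪θ', v⟫) θ) :
    ⟪θ + Δθ, μp⟫ - ⟪θ + Δθ, μm⟫ < ⟪θ, μp⟫ - ⟪θ, μm⟫ := by
  set a := ⟪θ, v⟫
  set s := Real.sigmoid a * (1 - Real.sigmoid a)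
  have hs : 0 < s := mul_pos (Real.sigmoid_pos a) (sub_pos.2 (Real.sigmoid_lt_one a))
  have hgrad : gradient (fun θ' => sigEnt ⟪θ', v⟫) θ = (-a * s) • v :=
    (hasDerivAt_sigEnt a).hasGradientAt_comp_inner.gradient
  have hgap : a * ⟪v, μp - μm⟫ < 0 := mul_neg_of_sign_mul_neg ha (hy ▸ hharm)
  have hstep : ⟪Δθ, μp⟫ - ⟪Δθ, μm⟫ = η * s * (a * ⟪v, μp - μm⟫) := by
    rw [hΔ, hgrad, smul_smul, ← inner_sub_right, real_inner_smul_left]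
    ring
  have hdrop : η * s * (a * ⟪v, μp - μm⟫) < 0 := mul_neg_of_pos_of_neg (mul_pos hη hs) hgap
  rw [inner_add_left, inner_add_left]
  linarith
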